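/- arXiv:math/0003162 — 3 statements merged into one kernel-verified Lean document; each statement's English description precedes it below -/
import Mathlib

section
/- Let s be a real constant, f(x) = ax² + bx⁴ − (x⁶−s²)/576, p(x,y) = f(x)/y² − (x³−s)/(24y) + 1/4, and Q(x,y) = (1/y²)[x f'(x)/2 − f(x) + ((x³−s)/24)²] − x³/(24y) − p(x,y)². Then on any domain with x ≠ 0 and y > 0: ∂Q/∂y = −(1/y)[2Q − 2p(p + (x³−s)/(24y) − 1/2) + x³/(24y)] and ∂Q/∂x = −(2/x)[(p − (x³−s)/(24y) + 1/2)(2p(p + (x³−s)/(24y) − 1/2) − x³/(24y)) − 2Q(1−p)]. -/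
/-!
In `u = 1/y`, `p = f u² − c u + 1/4` and `Q = g u² − x³ u/24 − p²` with `c = (x³ − s)/24` and
`g = x f'/2 − f + c²`. Since `y ∂_y = −u ∂_u`, the `y`-equation reduces to
`4 p (p − f u² + c u − 1/4) = 0`, so it holds whatever `f`, `g`, `c` are. The `x`-equation is a
polynomial identity in `x`, `u`, `a`, `b`, `s` once `g` is computed: `g = b x⁴ − x³ (x³ + 2s)/576`.
-/

/-- The function `f(x) = ax² + bx⁴ − (x⁶ − s²)/576`. -/
noncomputable def fAux (a b s x : ℝ) : ℝ :=
  a * x ^ 2 + b * x ^ 4 - (x ^ 6 - s ^ 2) / 576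

/-- `p(x,y) = f(x)/y² − (x³ − s)/(24y) + 1/4`. -/
noncomputable def pAux (a b s x y : ℝ) : ℝ :=
  fAux a b s x / y ^ 2 - (x ^ 3 - s) / (24 * y) + 1 / 4

/-- `Q(x,y) = (1/y²)[x f'(x)/2 − f(x) + ((x³−s)/24)²] − x³/(24y) − p(x,y)²`. -/
noncomputable def QAux (a b s x y : ℝ) : ℝ :=
  (1 / y ^ 2) * (x * deriv (fAux a b s) x / 2 - fAux a b s x + ((x ^ 3 - s) / 24) ^ 2)
    - x ^ 3 / (24 * y) - (pAux a b s x y) ^ 2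

theorem hasDerivAt_fAux (a b s x : ℝ) :
    HasDerivAt (fAux a b s) (2 * a * x + 4 * b * x ^ 3 - x ^ 5 / 96) x := by
  refine HasDerivAt.congr_deriv (f := fAux a b s)
    ((((hasDerivAt_pow 2 x).const_mul a).add ((hasDerivAt_pow 4 x).const_mul b)).sub
      (((hasDerivAt_pow 6 x).sub_const (s ^ 2)).div_const 576)) ?_
  push_cast
  ring

theorem deriv_fAux (a b s x : ℝ) :
    deriv (fAux a b s) x = 2 * a * x + 4 * b * x ^ 3 - x ^ 5 / 96 :=
  (hasDerivAt_fAux a b s x).deriv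

theorem QAux_eq (a b s x y : ℝ) :
    QAux a b s x y = (b * x ^ 4 - x ^ 3 * (x ^ 3 + 2 * s) / 576) / y ^ 2
      - x ^ 3 / (24 * y) - pAux a b s x y ^ 2 := by
  rw [QAux, deriv_fAux, fAux]
  ring

/-- `F`, `C`, `G`, `K` stand for `f(x)`, `x³ − s`, `g` and `x³`. -/
theorem hasDerivAt_quadratic_in_inv {F C G K y : ℝ} (hy : y ≠ 0) :
    let p := fun t : ℝ => F / t ^ 2 - C / (24 * t) + 1 / 4
    HasDerivAt (fun t => 1 / t ^ 2 * G - K / (24 * t) - p t ^ 2)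
      (-(1 / y) * (2 * (1 / y ^ 2 * G - K / (24 * y) - p y ^ 2)
        - 2 * p y * (p y + C / (24 * y) - 1 / 2) + K / (24 * y))) y := by
  intro p
  have h24 : (24 : ℝ) * y ≠ 0 := mul_ne_zero (by norm_num) hy
  have hsq : HasDerivAt (fun t : ℝ => t ^ 2) (2 * y) y := by
    simpa using hasDerivAt_pow 2 y
  have hlin : HasDerivAt (fun t : ℝ => 24 * t) 24 y := by
    simpa using (hasDerivAt_id y).const_mul (24 : ℝ)
  have hp : HasDerivAt p _ y :=
    (((hasDerivAt_const y F).div hsq (pow_ne_zero 2 hy)).sub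
      ((hasDerivAt_const y C).div hlin h24)).add_const _
  refine HasDerivAt.congr_deriv (f := fun t => 1 / t ^ 2 * G - K / (24 * t) - p t ^ 2)
    (((((hasDerivAt_const y 1).div hsq (pow_ne_zero 2 hy)).mul_const G).sub
      ((hasDerivAt_const y K).div hlin h24)).sub (hp.pow 2)) ?_
  simp only [p, Nat.cast_ofNat, Nat.add_one_sub_one, pow_one]
  field_simp
  ring

theorem hasDerivAt_pAux_fst (a b s x y : ℝ) :
    HasDerivAt (fun x' => pAux a b s x' y)
      ((2 * a * x + 4 * b * x ^ 3 - x ^ 5 / 96) / y ^ 2 - x ^ 2 / (8 * y)) x := by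
  refine HasDerivAt.congr_deriv (f := fun x' => pAux a b s x' y)
    ((((hasDerivAt_fAux a b s x).div_const (y ^ 2)).sub
      (((hasDerivAt_pow 3 x).sub_const s).div_const (24 * y))).add_const (1 / 4)) ?_
  push_cast
  ring

theorem hasDerivAt_QAux_fst (a b s x y : ℝ) :
    HasDerivAt (fun x' => QAux a b s x' y)
      ((4 * b * x ^ 3 - x ^ 2 * (x ^ 3 + s) / 96) / y ^ 2 - x ^ 2 / (8 * y)
        - 2 * pAux a b s x y
          * ((2 * a * x + 4 * b * x ^ 3 - x ^ 5 / 96) / y ^ 2 - x ^ 2 / (8 * y))) x := by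
  have hcoeff := ((((hasDerivAt_pow 4 x).const_mul b).sub
    (((hasDerivAt_pow 3 x).mul ((hasDerivAt_pow 3 x).add_const (2 * s))).div_const 576)).div_const
      (y ^ 2)).sub ((hasDerivAt_pow 3 x).div_const (24 * y))
  rw [show (fun x' => QAux a b s x' y) = _ from funext fun x' => QAux_eq a b s x' y]
  refine (hcoeff.sub ((hasDerivAt_pAux_fst a b s x y).pow 2)).congr_deriv ?_
  push_cast
  ring

/-- the explicit pair `(p, Q)` satisfies the two displayed first-order
PDEs for the partial derivatives of `Q` on any domain with `x ≠ 0`, `y > 0`. -/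
theorem stmt5 (a b s x y : ℝ) (hx : x ≠ 0) (hy : 0 < y) :
    deriv (fun y' => QAux a b s x y') y =
      -(1 / y) * (2 * QAux a b s x y
        - 2 * pAux a b s x y * (pAux a b s x y + (x ^ 3 - s) / (24 * y) - 1 / 2)
        + x ^ 3 / (24 * y)) ∧
    deriv (fun x' => QAux a b s x' y) x =
      -(2 / x) * ((pAux a b s x y - (x ^ 3 - s) / (24 * y) + 1 / 2)
          * (2 * pAux a b s x y * (pAux a b s x y + (x ^ 3 - s) / (24 * y) - 1 / 2)
              - x ^ 3 / (24 * y))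
        - 2 * QAux a b s x y * (1 - pAux a b s x y)) := by
  refine ⟨(hasDerivAt_quadratic_in_inv hy.ne').deriv, ?_⟩
  rw [(hasDerivAt_QAux_fst a b s x y).deriv, QAux_eq, pAux, fAux]
  field_simp
  ring
end

section
/- The mixed second partial derivatives of p(x,y) computed from the Frobenius system agree: if one defines A(x,y) = (1/x)[2Q + 2(p + u)(p − u + 1) − 1/2 − v] and B(x,y) = −(1/y)[2p + u − 1/2], where u = (x³−s)/(24y), v = x³/(24y), and p, Q are the explicit functions from the previous context, then ∂A/∂y = ∂B/∂x on the domain x ≠ 0, y > 0. -/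
/-- `u = (x³−s)/(24y)`, `v = x³/(24y)`;
`A(x,y) = (1/x)[2Q + 2(p + u)(p − u + 1) − 1/2 − v]`. -/
noncomputable def AAux (a b s x y : ℝ) : ℝ :=
  (1 / x) * (2 * QAux a b s x y
    + 2 * (pAux a b s x y + (x ^ 3 - s) / (24 * y))
        * (pAux a b s x y - (x ^ 3 - s) / (24 * y) + 1)
    - 1 / 2 - x ^ 3 / (24 * y))

/-- `B(x,y) = −(1/y)[2p + u − 1/2]`. -/
noncomputable def BAux (a b s x y : ℝ) : ℝ :=
  -(1 / y) * (2 * pAux a b s x y + (x ^ 3 - s) / (24 * y) - 1 / 2)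

/-!
Both sides collapse to `−2 f'(x)/y³ + x²/(8y²)`. In `A` the terms `p²` and `u²` cancel and
what is left is `A = f'(x)/y² − x²/(8y)`, which holds for any differentiable `f`; while
`B = −2 f(x)/y³ + (x³ − s)/(24y²)`. Differentiating these closed forms gives the claim.
-/

theorem differentiable_fAux (a b s : ℝ) : Differentiable ℝ (fAux a b s) := by
  unfold fAux
  fun_prop

theorem AAux_eq {a b s x y : ℝ} (hx : x ≠ 0) (hy : y ≠ 0) :
    AAux a b s x y = deriv (fAux a b s) x / y ^ 2 - x ^ 2 / (8 * y) := by
  unfold AAux QAux pAux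
  field_simp
  ring

theorem BAux_eq {a b s x y : ℝ} (hy : y ≠ 0) :
    BAux a b s x y = -2 * fAux a b s x / y ^ 3 + (x ^ 3 - s) / (24 * y ^ 2) := by
  unfold BAux pAux
  field_simp
  ring

theorem hasDerivAt_AAux_right {a b s x y : ℝ} (hx : x ≠ 0) (hy : y ≠ 0) :
    HasDerivAt (fun y' => AAux a b s x y')
      (-2 * deriv (fAux a b s) x / y ^ 3 + x ^ 2 / (8 * y ^ 2)) y := by
  set C := deriv (fAux a b s) x
  have h := ((hasDerivAt_const y C).div (hasDerivAt_pow 2 y) (pow_ne_zero 2 hy)).sub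
    ((hasDerivAt_const y (x ^ 2)).div ((hasDerivAt_id' y).const_mul 8) (mul_ne_zero (by norm_num) hy))
  refine (h.congr_deriv (by field_simp; ring)).congr_of_eventuallyEq ?_
  filter_upwards [eventually_ne_nhds hy] with y' hy'
  exact AAux_eq hx hy'

theorem hasDerivAt_BAux_left {a b s x y : ℝ} (hy : y ≠ 0) :
    HasDerivAt (fun x' => BAux a b s x' y)
      (-2 * deriv (fAux a b s) x / y ^ 3 + x ^ 2 / (8 * y ^ 2)) x := by
  have h := (((differentiable_fAux a b s x).hasDerivAt.const_mul (-2)).div_const (y ^ 3)).add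
    (((hasDerivAt_pow 3 x).sub_const s).div_const (24 * y ^ 2))
  refine (h.congr_deriv (by norm_num; ring)).congr_of_eventuallyEq (.of_forall fun x' => ?_)
  exact BAux_eq hy

/-- the mixed second partials of `p` computed from the Frobenius system
agree: `∂A/∂y = ∂B/∂x` on the domain `x ≠ 0`, `y > 0`. -/
theorem stmt6 (a b s x y : ℝ) (hx : x ≠ 0) (hy : 0 < y) :
    deriv (fun y' => AAux a b s x y') y = deriv (fun x' => BAux a b s x' y) x := by
  rw [(hasDerivAt_AAux_right hx hy.ne').deriv, (hasDerivAt_BAux_left hy.ne').deriv]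
end

section
/- Let J₁ and J₂ be two orthogonal complex structures on a 4-dimensional inner product space V (i.e. isometries with J² = −Id), and set p = −(1/4)tr(J₁ ∘ J₂). Then J₁ ∘ J₂ + J₂ ∘ J₁ = −2p · Id, provided J₁ and J₂ are both compatible with the same orientation (i.e. both are self-dual). -/
/-!
A self-dual skew-symmetric matrix on `ℝ⁴` is `a • I + b • J + c • K`, where `I, J, K` are the
matrices of multiplication by the imaginary quaternion units. These square to `-1` and pairwise
anticommute, so the anticommutator of two such matrices is the scalar `-2 (a a' + b b' + c c')`,
and the trace of their product is `-4 (a a' + b b' + c c')`.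
-/

open Matrix
/-- A skew-symmetric `4×4` real matrix is *self-dual* (its associated 2-form on
oriented Euclidean `ℝ⁴` lies in the `+1`-eigenspace of the Hodge star) iff
`A₀₁ = A₂₃`, `A₀₂ = A₃₁`, `A₀₃ = A₁₂`. -/
def SelfDualSkew (A : Matrix (Fin 4) (Fin 4) ℝ) : Prop :=
  Aᵀ = -A ∧ A 0 1 = A 2 3 ∧ A 0 2 = A 3 1 ∧ A 0 3 = A 1 2

def selfDualOfCoeffs (a b c : ℝ) : Matrix (Fin 4) (Fin 4) ℝ :=
  !![0, a, b, c; -a, 0, c, -b; -b, -c, 0, a; -c, b, -a, 0]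

lemma SelfDualSkew.eq_selfDualOfCoeffs {A : Matrix (Fin 4) (Fin 4) ℝ} (h : SelfDualSkew A) :
    A = selfDualOfCoeffs (A 0 1) (A 0 2) (A 0 3) := by
  obtain ⟨hskew, h01, h02, h03⟩ := h
  have hanti : ∀ i j, A j i = -A i j := fun i j => by
    simpa using congrFun (congrFun hskew i) j
  have hdiag : ∀ i, A i i = 0 := fun i => by linarith [hanti i i]
  ext i j
  fin_cases i <;> fin_cases j <;>
    simp [selfDualOfCoeffs, hdiag, hanti 0 1, hanti 0 2, hanti 0 3, hanti 1 2, hanti 1 3,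
      hanti 2 3, h01, h02, h03]

lemma trace_selfDualOfCoeffs_mul (a b c a' b' c' : ℝ) :
    trace (selfDualOfCoeffs a b c * selfDualOfCoeffs a' b' c') =
      -4 * (a * a' + b * b' + c * c') := by
  simp [selfDualOfCoeffs, trace, Fin.sum_univ_four]
  ring

lemma selfDualOfCoeffs_mul_add_mul (a b c a' b' c' : ℝ) :
    selfDualOfCoeffs a b c * selfDualOfCoeffs a' b' c' +
        selfDualOfCoeffs a' b' c' * selfDualOfCoeffs a b c =
      (-2 * (a * a' + b * b' + c * c')) • (1 : Matrix (Fin 4) (Fin 4) ℝ) := by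
  ext i j
  fin_cases i <;> fin_cases j <;>
    simp [selfDualOfCoeffs, one_apply] <;> ring

theorem stmt9_general (J₁ J₂ : Matrix (Fin 4) (Fin 4) ℝ)
    (h₁sd : SelfDualSkew J₁) (h₂sd : SelfDualSkew J₂) :
    J₁ * J₂ + J₂ * J₁ =
      (-2 * (-(1 / 4) * Matrix.trace (J₁ * J₂))) • (1 : Matrix (Fin 4) (Fin 4) ℝ) := by
  rw [h₁sd.eq_selfDualOfCoeffs, h₂sd.eq_selfDualOfCoeffs, selfDualOfCoeffs_mul_add_mul,
    trace_selfDualOfCoeffs_mul]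
  ring_nf

/-- if `J₁, J₂` are two orthogonal complex structures on oriented
Euclidean `ℝ⁴`, both self-dual, and `p = −(1/4) tr(J₁J₂)`, then
`J₁J₂ + J₂J₁ = −2p·Id`. -/
theorem stmt9 (J₁ J₂ : Matrix (Fin 4) (Fin 4) ℝ)
    (h₁o : J₁ᵀ * J₁ = 1) (h₂o : J₂ᵀ * J₂ = 1)
    (h₁sq : J₁ * J₁ = -1) (h₂sq : J₂ * J₂ = -1)
    (h₁sd : SelfDualSkew J₁) (h₂sd : SelfDualSkew J₂) :
    J₁ * J₂ + J₂ * J₁ =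
      (-2 * (-(1 / 4) * Matrix.trace (J₁ * J₂))) • (1 : Matrix (Fin 4) (Fin 4) ℝ) :=
  stmt9_general J₁ J₂ h₁sd h₂sd
end
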